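/- arXiv:math/0703479 — 3 statements merged into one kernel-verified Lean document; each statement's English description precedes it below -/
import Mathlib

section
/- Let X be a finite set with an action of a product C × C' of finite cyclic groups of orders k and ℓ, let ω : C → ℂ^× and ω' : C' → ℂ^× be injective group homomorphisms, and let X(t,q) be a polynomial in two variables with nonnegative integer coefficients. For 0 ≤ i < k and 0 ≤ j < ℓ, let a(i,j) denote the sum of the coefficients of t^α q^β in X(t,q) over all α ≡ i (mod k) and β ≡ j (mod ℓ) (so X(t,q) ≡ Σ a(i,j) t^i q^j modulo (t^k − 1, q^ℓ − 1)), and let ρ^{(i,j)} : C × C' → ℂ^× be the character ρ^{(i,j)}(c,c') = ω(c)^i ω'(c')^j. Then the following are equivalent: (i) for every (c,c') ∈ C × C', X(ω(c), ω'(c')) = |{x ∈ X : (c,c')·x = x}|; (ii) for all 0 ≤ i < k and 0 ≤ j < ℓ, a(i,j) equals the number of C × C'-orbits on X whose stabilizer subgroup (of any element of the orbit) is contained in the kernel of ρ^{(i,j)}. -/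
open MvPolynomial

noncomputable section

open Finset
open scoped Classical
private lemma sum_char_group {G : Type*} [Group G] [Fintype G] (φ : G →* ℂˣ) :
    ∑ g : G, ((φ g : ℂˣ) : ℂ) = if ∀ g, φ g = 1 then (Fintype.card G : ℂ) else 0 := by
  split_ifs with h
  · simp [h]
  · push_neg at h
    obtain ⟨b, hb⟩ := h
    have key : ∑ g : G, ((φ (b * g) : ℂˣ) : ℂ) = ∑ g : G, ((φ g : ℂˣ) : ℂ) :=
      Fintype.sum_equiv (Equiv.mulLeft b) _ _ (fun g => rfl)
    have key2 : ((φ b : ℂˣ) : ℂ) * ∑ g : G, ((φ g : ℂˣ) : ℂ) = ∑ g : G, ((φ g : ℂˣ) : ℂ) := by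
      rw [Finset.mul_sum, ← key]
      exact Finset.sum_congr rfl (fun g _ => by rw [map_mul]; push_cast; ring)
    have hb' : ((φ b : ℂˣ) : ℂ) ≠ 1 := fun hc => hb (Units.ext hc)
    have := sub_eq_zero.mpr key2
    rw [← sub_one_mul] at this
    rcases mul_eq_zero.mp this with h1 | h2
    · exact absurd (by linear_combination h1 : ((φ b : ℂˣ) : ℂ) = 1) hb'
    · exact h2

private lemma sum_pow_unit {z : ℂ} {n : ℕ} (hn : z ^ n = 1) (h1 : z ≠ 1) :
    ∑ i ∈ Finset.range n, z ^ i = 0 := by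
  rw [geom_sum_eq h1, hn, sub_self, zero_div]

private def psiAux {C C' : Type*} [Group C] [Group C'] (ω : C →* ℂˣ) (ω' : C' →* ℂˣ)
    (i j : ℕ) : C × C' →* ℂˣ :=
  ((ω.comp (MonoidHom.fst C C')) ^ i) * ((ω'.comp (MonoidHom.snd C C')) ^ j)

example {C C' : Type*} [Group C] [Group C'] (ω : C →* ℂˣ) (ω' : C' →* ℂˣ) (i j : ℕ)
    (p : C × C') : psiAux ω ω' i j p = (ω p.1) ^ i * (ω' p.2) ^ j := rfl

private lemma pow_card_one {C : Type*} [Group C] [Fintype C] (ω : C →* ℂˣ) (c : C) :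
    ((ω c : ℂˣ) : ℂ) ^ Fintype.card C = 1 := by
  rw [← Units.val_pow_eq_pow_val, ← map_pow, pow_card_eq_one, map_one, Units.val_one]

private lemma char_range_sum {C : Type*} [Group C] [Fintype C] (ω : C →* ℂˣ)
    (hω : Function.Injective ω) (a : C) :
    ∑ i ∈ Finset.range (Fintype.card C), ((ω a : ℂˣ) : ℂ) ^ i =
      if a = 1 then (Fintype.card C : ℂ) else 0 := by
  split_ifs with h
  · simp [h]
  · refine sum_pow_unit (pow_card_one ω a) (fun hc => h ?_)
    exact hω (by rw [Units.ext_iff, hc, map_one, Units.val_one])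

private lemma char_inj {C : Type*} [Group C] [Fintype C] [IsCyclic C] (ω : C →* ℂˣ)
    (hω : Function.Injective ω) {i i' : ℕ} (hi : i < Fintype.card C)
    (hi' : i' < Fintype.card C) (h : ∀ c : C, (ω c) ^ i = (ω c) ^ i') : i = i' := by
  obtain ⟨g, hg⟩ := IsCyclic.exists_generator (α := C)
  have hord : orderOf (ω g) = Fintype.card C := by
    rw [orderOf_injective ω hω, orderOf_eq_card_of_forall_mem_zpowers hg, Nat.card_eq_fintype_card]

  have := (pow_eq_pow_iff_modEq.mp (h g))
  rw [hord] at this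
  rw [← Nat.mod_eq_of_lt hi, ← Nat.mod_eq_of_lt hi']
  exact this

private lemma orth {C : Type*} [Group C] [Fintype C] [IsCyclic C] (ω : C →* ℂˣ)
    (hω : Function.Injective ω) {i i' : ℕ} (hi : i < Fintype.card C)
    (hi' : i' < Fintype.card C) :
    ∑ c : C, ((ω c : ℂˣ) : ℂ) ^ i * ((((ω c)⁻¹ : ℂˣ) : ℂ)) ^ i' =
      if i = i' then (Fintype.card C : ℂ) else 0 := by
  have hs := sum_char_group ((ω ^ i) * ((ω ^ i')⁻¹))
  have he : ∀ c : C, ((((ω ^ i) * ((ω ^ i')⁻¹)) c : ℂˣ) : ℂ) =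
      ((ω c : ℂˣ) : ℂ) ^ i * ((((ω c)⁻¹ : ℂˣ) : ℂ)) ^ i' := by
    intro c
    simp [MonoidHom.mul_apply, MonoidHom.inv_apply, MonoidHom.pow_apply]
  rw [Fintype.sum_congr _ _ he] at hs
  rw [hs]
  have hcond : (∀ c : C, ((ω ^ i) * ((ω ^ i')⁻¹)) c = 1) ↔ i = i' := by
    constructor
    · intro h
      refine char_inj ω hω hi hi' (fun c => ?_)
      have := h c
      simp [MonoidHom.mul_apply, MonoidHom.inv_apply, MonoidHom.pow_apply,
        mul_inv_eq_one] at this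
      exact this
    · intro h; subst h; intro c
      simp [MonoidHom.mul_apply, MonoidHom.inv_apply, MonoidHom.pow_apply]
  simp only [hcond]

private lemma evalP {C C' : Type*} [Group C] [Group C'] [Fintype C] [Fintype C']
    (k l : ℕ) (hk : k = Fintype.card C) (hl : l = Fintype.card C')
    (ω : C →* ℂˣ) (ω' : C' →* ℂˣ) (P : MvPolynomial (Fin 2) ℕ) (c : C) (c' : C') :
    eval₂ (Nat.castRingHom ℂ) ![((ω c : ℂˣ) : ℂ), ((ω' c' : ℂˣ) : ℂ)] P =
      ∑ i ∈ range k, ∑ j ∈ range l,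
        ((∑ m ∈ P.support, if m (0 : Fin 2) % k = i ∧ m (1 : Fin 2) % l = j
            then coeff m P else 0 : ℕ) : ℂ) *
          (((ω c : ℂˣ) : ℂ) ^ i * ((ω' c' : ℂˣ) : ℂ) ^ j) := by
  have hk0 : 0 < k := hk ▸ Fintype.card_pos
  have hl0 : 0 < l := hl ▸ Fintype.card_pos
  have hx : ((ω c : ℂˣ) : ℂ) ^ k = 1 := by rw [hk]; exact pow_card_one ω c
  have hy : ((ω' c' : ℂˣ) : ℂ) ^ l = 1 := by rw [hl]; exact pow_card_one ω' c'
  rw [eval₂_eq']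
  simp only [Matrix.cons_val_zero, Matrix.cons_val_one, Matrix.head_cons, Fin.prod_univ_two]
  have hrw : ∀ d ∈ P.support, (Nat.castRingHom ℂ) (coeff d P) *
      (((ω c : ℂˣ) : ℂ) ^ (d 0) * ((ω' c' : ℂˣ) : ℂ) ^ (d 1)) =
      ((coeff d P : ℕ) : ℂ) *
      (((ω c : ℂˣ) : ℂ) ^ (d 0 % k) * ((ω' c' : ℂˣ) : ℂ) ^ (d 1 % l)) := by
    intro d _
    rw [← pow_eq_pow_mod _ hx, ← pow_eq_pow_mod _ hy]; rfl
  rw [Finset.sum_congr rfl hrw,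
    ← Finset.sum_fiberwise_of_maps_to (g := fun d : Fin 2 →₀ ℕ => (d 0 % k, d 1 % l))
      (t := Finset.range k ×ˢ Finset.range l)
      (fun d _ => Finset.mem_product.mpr
        ⟨Finset.mem_range.mpr (Nat.mod_lt _ hk0), Finset.mem_range.mpr (Nat.mod_lt _ hl0)⟩),
    Finset.sum_product]
  refine Finset.sum_congr rfl fun i _ => Finset.sum_congr rfl fun j _ => ?_
  have hflt : (Finset.filter (fun d : Fin 2 →₀ ℕ => (d 0 % k, d 1 % l) = (i, j)) P.support) =
      Finset.filter (fun d : Fin 2 →₀ ℕ => d (0 : Fin 2) % k = i ∧ d (1 : Fin 2) % l = j)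
        P.support :=
    Finset.filter_congr (fun d _ => by simp [Prod.ext_iff])
  have hcast : ((∑ m ∈ P.support, if m (0 : Fin 2) % k = i ∧ m (1 : Fin 2) % l = j
        then coeff m P else 0 : ℕ) : ℂ)
      = ∑ m ∈ Finset.filter
          (fun d : Fin 2 →₀ ℕ => d (0 : Fin 2) % k = i ∧ d (1 : Fin 2) % l = j) P.support,
          ((coeff m P : ℕ) : ℂ) := by
    rw [← Finset.sum_filter]
    push_cast
    rfl
  rw [hflt, hcast, Finset.sum_mul]
  refine Finset.sum_congr rfl fun d hd => ?_
  obtain ⟨-, h1, h2⟩ := Finset.mem_filter.mp hd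
  rw [h1, h2]

private lemma psiAux_apply {C C' : Type*} [Group C] [Group C'] (ω : C →* ℂˣ) (ω' : C' →* ℂˣ)
    (i j : ℕ) (p : C × C') : psiAux ω ω' i j p = (ω p.1) ^ i * (ω' p.2) ^ j := rfl

private lemma psiAux_inv_val {C C' : Type*} [Group C] [Group C'] (ω : C →* ℂˣ) (ω' : C' →* ℂˣ)
    (i j : ℕ) (p : C × C') : (((psiAux ω ω' i j p)⁻¹ : ℂˣ) : ℂ) =
      (((ω p.1)⁻¹ : ℂˣ) : ℂ) ^ i * (((ω' p.2)⁻¹ : ℂˣ) : ℂ) ^ j := by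
  rw [psiAux_apply, mul_inv, ← inv_pow, ← inv_pow]
  push_cast
  rfl

private lemma card_subtype_sum {α : Type*} [Fintype α] (p : α → Prop) :
    (Nat.card {a // p a} : ℂ) = ∑ a : α, if p a then (1 : ℂ) else 0 := by
  rw [Nat.card_eq_fintype_card, Fintype.card_subtype, Finset.card_filter]
  push_cast
  exact Finset.sum_congr rfl (fun a _ => by split_ifs <;> simp)

private lemma fix_fourier {C C' : Type*} [Group C] [Group C'] [Fintype C] [Fintype C']
    [IsCyclic C] [IsCyclic C'] (X : Type*) [Fintype X] [MulAction (C × C') X]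
    (ω : C →* ℂˣ) (ω' : C' →* ℂˣ) (i j : ℕ) :
    ∑ p : C × C', (Nat.card {x : X // p • x = x} : ℂ) * (((psiAux ω ω' i j p)⁻¹ : ℂˣ) : ℂ) =
      (Nat.card {o : Quotient (MulAction.orbitRel (C × C') X) //
        ∀ x : X, Quotient.mk (MulAction.orbitRel (C × C') X) x = o →
          ∀ g ∈ MulAction.stabilizer (C × C') x,
            (ω g.1 : ℂˣ) ^ i * (ω' g.2 : ℂˣ) ^ j = 1} : ℂ) *
        ((Fintype.card C : ℂ) * (Fintype.card C')) := by
  have hcomm : ∀ a b : C × C', a * b = b * a := by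
    letI : CommGroup C := IsCyclic.commGroup
    letI : CommGroup C' := IsCyclic.commGroup
    intro a b; exact mul_comm a b
  have hstabm : ∀ (m : C × C') (y : X),
      MulAction.stabilizer (C × C') (m • y) = MulAction.stabilizer (C × C') y := by
    intro m y; ext g
    simp only [MulAction.mem_stabilizer_iff]
    rw [smul_smul, hcomm g m, ← smul_smul]
    exact smul_left_cancel_iff m
  -- notation
  set S : X → Subgroup (C × C') := fun x => MulAction.stabilizer (C × C') x with hS
  set cnd : X → Prop := fun x => ∀ g ∈ S x, (ω g.1 : ℂˣ) ^ i * (ω' g.2 : ℂˣ) ^ j = 1 with hcnd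
  -- step 1 : sum over p equals sum over x of stabilizer character sums
  have step1 : ∑ p : C × C',
      (Nat.card {x : X // p • x = x} : ℂ) * (((psiAux ω ω' i j p)⁻¹ : ℂˣ) : ℂ) =
      ∑ x : X, (if cnd x then (Fintype.card (S x) : ℂ) else 0) := by
    have e1 : ∀ p : C × C',
        (Nat.card {x : X // p • x = x} : ℂ) * (((psiAux ω ω' i j p)⁻¹ : ℂˣ) : ℂ) =
        ∑ x : X, (if p • x = x then (((psiAux ω ω' i j p)⁻¹ : ℂˣ) : ℂ) else 0) := by
      intro p
      rw [card_subtype_sum, Finset.sum_mul]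
      exact Finset.sum_congr rfl fun x _ => by split_ifs <;> simp
    rw [Fintype.sum_congr _ _ e1, Finset.sum_comm]
    refine Fintype.sum_congr _ _ fun x => ?_
    have e2 : ∑ p : C × C', (if p • x = x then (((psiAux ω ω' i j p)⁻¹ : ℂˣ) : ℂ) else 0) =
        ∑ p : ↥(S x), ((((psiAux ω ω' i j)⁻¹).comp (S x).subtype p : ℂˣ) : ℂ) := by
      rw [← Finset.sum_filter]
      exact Finset.sum_subtype _ (fun p => by
        simp [MulAction.mem_stabilizer_iff, hS]) _
    rw [e2, sum_char_group]
    congr 1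
    · rw [eq_iff_iff]
      simp only [MonoidHom.comp_apply, MonoidHom.inv_apply, inv_eq_one, psiAux_apply,
        Subgroup.coe_subtype, Subtype.forall, hcnd]
  rw [step1]
  -- step 2 : orbit decomposition
  have hdec : ∑ x : X, (if cnd x then (Fintype.card (S x) : ℂ) else 0) =
      ∑ o : Quotient (MulAction.orbitRel (C × C') X),
        ∑ s : {x : X // Quotient.mk (MulAction.orbitRel (C × C') X) x = o},
          (if cnd s.1 then (Fintype.card (S s.1) : ℂ) else 0) := by
    rw [← Fintype.sum_equiv
      (Equiv.sigmaFiberEquiv (fun x : X => Quotient.mk (MulAction.orbitRel (C × C') X) x))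
      _ (fun x => if cnd x then (Fintype.card (S x) : ℂ) else 0) (fun s => rfl),
      ← Finset.univ_sigma_univ, Finset.sum_sigma]
    rfl
  rw [hdec]
  set cond : Quotient (MulAction.orbitRel (C × C') X) → Prop := fun o =>
    ∀ x : X, Quotient.mk (MulAction.orbitRel (C × C') X) x = o →
      ∀ g ∈ MulAction.stabilizer (C × C') x,
        (ω g.1 : ℂˣ) ^ i * (ω' g.2 : ℂˣ) ^ j = 1 with hcond
  have horb : ∀ o : Quotient (MulAction.orbitRel (C × C') X),
      (∑ s : {x : X // Quotient.mk (MulAction.orbitRel (C × C') X) x = o},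
        (if cnd s.1 then (Fintype.card (S s.1) : ℂ) else 0)) =
      (if cond o then (1 : ℂ) else 0) * ((Fintype.card C : ℂ) * (Fintype.card C')) := by
    intro o
    obtain ⟨y, hy⟩ : ∃ y : X, Quotient.mk (MulAction.orbitRel (C × C') X) y = o :=
      ⟨o.out, Quotient.out_eq o⟩
    have hsx : ∀ z : X, Quotient.mk (MulAction.orbitRel (C × C') X) z = o →
        MulAction.stabilizer (C × C') z = MulAction.stabilizer (C × C') y := by
      intro z hz
      have hzy : z ∈ MulAction.orbit (C × C') y := by
        rw [← MulAction.orbitRel_apply]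
        exact Quotient.eq.mp (hz.trans hy.symm)
      obtain ⟨m, hm⟩ := MulAction.mem_orbit_iff.mp hzy
      rw [← hm]
      exact hstabm m y
    have hco : cond o ↔ cnd y := by
      constructor
      · intro h; exact h y hy
      · intro h x hx g hg
        rw [hsx x hx] at hg
        exact h g hg
    have hterm : ∀ s : {x : X // Quotient.mk (MulAction.orbitRel (C × C') X) x = o},
        (if cnd s.1 then (Fintype.card (S s.1) : ℂ) else 0) =
        (if cond o then (Fintype.card (S y) : ℂ) else 0) := by
      intro s
      have h1 : S s.1 = S y := hsx s.1 s.2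
      have h2 : cnd s.1 ↔ cond o := by rw [hcnd]; simp only [h1]; exact hco.symm
      simp only [h2, h1]
    rw [Fintype.sum_congr _ _ hterm, Finset.sum_const, Finset.card_univ, nsmul_eq_mul]
    have hcardfib : Fintype.card {x : X // Quotient.mk (MulAction.orbitRel (C × C') X) x = o}
        = Fintype.card (MulAction.orbit (C × C') y) := by
      refine Fintype.card_congr (Equiv.subtypeEquivRight fun z => ?_)
      rw [← hy, Quotient.eq, MulAction.orbitRel_apply]
    have horbstab := MulAction.card_orbit_mul_card_stabilizer_eq_card_group (C × C') y
    rw [hcardfib]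
    split_ifs
    · rw [one_mul, ← Nat.cast_mul, horbstab, Fintype.card_prod]
      push_cast; ring
    · rw [mul_zero, zero_mul]
  rw [Fintype.sum_congr _ _ horb, ← Finset.sum_mul, card_subtype_sum cond]
  congr 1
  exact Finset.sum_congr rfl fun o _ => by split_ifs <;> rfl

private lemma inv_fourier {C C' : Type*} [Group C] [Group C'] [Fintype C] [Fintype C']
    [IsCyclic C] [IsCyclic C'] (k l : ℕ) (hk : k = Fintype.card C) (hl : l = Fintype.card C')
    (ω : C →* ℂˣ) (hω : Function.Injective ω) (ω' : C' →* ℂˣ) (hω' : Function.Injective ω')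
    (u : ℕ → ℕ → ℂ) {i j : ℕ} (hi : i < k) (hj : j < l) :
    ∑ p : C × C',
      (∑ i' ∈ Finset.range k, ∑ j' ∈ Finset.range l,
        u i' j' * (((ω p.1 : ℂˣ) : ℂ) ^ i' * ((ω' p.2 : ℂˣ) : ℂ) ^ j')) *
      (((psiAux ω ω' i j p)⁻¹ : ℂˣ) : ℂ) =
      u i j * ((k : ℂ) * l) := by
  have e1 : ∀ p : C × C',
      (∑ i' ∈ Finset.range k, ∑ j' ∈ Finset.range l,
        u i' j' * (((ω p.1 : ℂˣ) : ℂ) ^ i' * ((ω' p.2 : ℂˣ) : ℂ) ^ j')) *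
      (((psiAux ω ω' i j p)⁻¹ : ℂˣ) : ℂ) =
      ∑ i' ∈ Finset.range k, ∑ j' ∈ Finset.range l,
        u i' j' * ((((ω p.1 : ℂˣ) : ℂ) ^ i' * (((ω p.1)⁻¹ : ℂˣ) : ℂ) ^ i) *
          (((ω' p.2 : ℂˣ) : ℂ) ^ j' * (((ω' p.2)⁻¹ : ℂˣ) : ℂ) ^ j)) := by
    intro p
    rw [Finset.sum_mul]
    refine Finset.sum_congr rfl fun i' _ => ?_
    rw [Finset.sum_mul]
    refine Finset.sum_congr rfl fun j' _ => ?_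
    rw [psiAux_inv_val]
    ring
  rw [Fintype.sum_congr _ _ e1, Finset.sum_comm]
  have e2 : ∀ i' ∈ Finset.range k,
      (∑ p : C × C', ∑ j' ∈ Finset.range l,
        u i' j' * ((((ω p.1 : ℂˣ) : ℂ) ^ i' * (((ω p.1)⁻¹ : ℂˣ) : ℂ) ^ i) *
          (((ω' p.2 : ℂˣ) : ℂ) ^ j' * (((ω' p.2)⁻¹ : ℂˣ) : ℂ) ^ j))) =
      ∑ j' ∈ Finset.range l,
        u i' j' * ((if i' = i then (Fintype.card C : ℂ) else 0) *
          (if j' = j then (Fintype.card C' : ℂ) else 0)) := by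
    intro i' hi'
    rw [Finset.sum_comm]
    refine Finset.sum_congr rfl fun j' hj' => ?_
    have : ∑ p : C × C',
        u i' j' * ((((ω p.1 : ℂˣ) : ℂ) ^ i' * (((ω p.1)⁻¹ : ℂˣ) : ℂ) ^ i) *
          (((ω' p.2 : ℂˣ) : ℂ) ^ j' * (((ω' p.2)⁻¹ : ℂˣ) : ℂ) ^ j)) =
        u i' j' * ((∑ c : C, ((ω c : ℂˣ) : ℂ) ^ i' * (((ω c)⁻¹ : ℂˣ) : ℂ) ^ i) *
          (∑ c' : C', ((ω' c' : ℂˣ) : ℂ) ^ j' * (((ω' c')⁻¹ : ℂˣ) : ℂ) ^ j)) := by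
      rw [Fintype.sum_prod_type, Finset.sum_mul_sum, Finset.mul_sum]
      refine Finset.sum_congr rfl fun c _ => ?_
      rw [Finset.mul_sum]
    rw [this, orth ω hω (hk ▸ Finset.mem_range.mp hi') (hk ▸ hi),
      orth ω' hω' (hl ▸ Finset.mem_range.mp hj') (hl ▸ hj)]
  rw [Finset.sum_congr rfl e2,
    Finset.sum_eq_single i (fun i' _ hne => by simp [hne]) (fun h => absurd (Finset.mem_range.mpr hi) h),
    Finset.sum_eq_single j (fun j' _ hne => by simp [hne]) (fun h => absurd (Finset.mem_range.mpr hj) h)]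
  simp [hk, hl]

private lemma fourier_inv {C C' : Type*} [Group C] [Group C'] [Fintype C] [Fintype C']
    (k l : ℕ) (hk : k = Fintype.card C) (hl : l = Fintype.card C')
    (ω : C →* ℂˣ) (hω : Function.Injective ω) (ω' : C' →* ℂˣ) (hω' : Function.Injective ω')
    (f : C × C' → ℂ) (p : C × C') :
    ∑ i ∈ Finset.range k, ∑ j ∈ Finset.range l,
      (∑ q : C × C', f q * (((psiAux ω ω' i j q)⁻¹ : ℂˣ) : ℂ)) *
        (((ω p.1 : ℂˣ) : ℂ) ^ i * ((ω' p.2 : ℂˣ) : ℂ) ^ j) =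
      f p * ((k : ℂ) * l) := by
  have e1 : ∀ i ∈ Finset.range k, ∀ j ∈ Finset.range l,
      (∑ q : C × C', f q * (((psiAux ω ω' i j q)⁻¹ : ℂˣ) : ℂ)) *
        (((ω p.1 : ℂˣ) : ℂ) ^ i * ((ω' p.2 : ℂˣ) : ℂ) ^ j) =
      ∑ q : C × C', f q *
        ((((ω p.1 : ℂˣ) : ℂ) * (((ω q.1)⁻¹ : ℂˣ) : ℂ)) ^ i *
         (((ω' p.2 : ℂˣ) : ℂ) * (((ω' q.2)⁻¹ : ℂˣ) : ℂ)) ^ j) := by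
    intro i _ j _
    rw [Finset.sum_mul]
    refine Finset.sum_congr rfl fun q _ => ?_
    rw [psiAux_inv_val, mul_pow, mul_pow]
    ring
  rw [Finset.sum_congr rfl fun i hi => Finset.sum_congr rfl (e1 i hi)]
  rw [Finset.sum_congr rfl fun i _ => Finset.sum_comm, Finset.sum_comm]
  have e2 : ∀ q : C × C',
      (∑ i ∈ Finset.range k, ∑ j ∈ Finset.range l, f q *
        ((((ω p.1 : ℂˣ) : ℂ) * (((ω q.1)⁻¹ : ℂˣ) : ℂ)) ^ i *
         (((ω' p.2 : ℂˣ) : ℂ) * (((ω' q.2)⁻¹ : ℂˣ) : ℂ)) ^ j)) =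
      f q * ((if p.1 * q.1⁻¹ = 1 then (k : ℂ) else 0) *
        (if p.2 * q.2⁻¹ = 1 then (l : ℂ) else 0)) := by
    intro q
    have hx : (((ω (p.1 * q.1⁻¹)) : ℂˣ) : ℂ) =
        ((ω p.1 : ℂˣ) : ℂ) * (((ω q.1)⁻¹ : ℂˣ) : ℂ) := by
      rw [map_mul, map_inv]; push_cast; rfl
    have hy : (((ω' (p.2 * q.2⁻¹)) : ℂˣ) : ℂ) =
        ((ω' p.2 : ℂˣ) : ℂ) * (((ω' q.2)⁻¹ : ℂˣ) : ℂ) := by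
      rw [map_mul, map_inv]; push_cast; rfl
    calc ∑ i ∈ Finset.range k, ∑ j ∈ Finset.range l, f q *
          ((((ω p.1 : ℂˣ) : ℂ) * (((ω q.1)⁻¹ : ℂˣ) : ℂ)) ^ i *
           (((ω' p.2 : ℂˣ) : ℂ) * (((ω' q.2)⁻¹ : ℂˣ) : ℂ)) ^ j)
        = f q * ((∑ i ∈ Finset.range k, (((ω (p.1 * q.1⁻¹)) : ℂˣ) : ℂ) ^ i) *
            (∑ j ∈ Finset.range l, (((ω' (p.2 * q.2⁻¹)) : ℂˣ) : ℂ) ^ j)) := by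
          rw [hx, hy, Finset.sum_mul_sum, Finset.mul_sum]
          refine Finset.sum_congr rfl fun i _ => ?_
          rw [Finset.mul_sum]
      _ = f q * ((if p.1 * q.1⁻¹ = 1 then (k : ℂ) else 0) *
            (if p.2 * q.2⁻¹ = 1 then (l : ℂ) else 0)) := by
          rw [hk, hl, char_range_sum ω hω, char_range_sum ω' hω']
  rw [Fintype.sum_congr _ _ e2]
  rw [Fintype.sum_eq_single p (fun q hq => ?_)]
  · simp
  · have : p.1 ≠ q.1 ∨ p.2 ≠ q.2 := by
      by_contra hc
      push_neg at hc
      exact hq (Prod.ext_iff.mpr ⟨hc.1.symm, hc.2.symm⟩)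
    rcases this with h | h
    · rw [if_neg (show ¬p.1 * q.1⁻¹ = 1 by simp [mul_inv_eq_one, h]), zero_mul, mul_zero]
    · rw [if_neg (show ¬p.2 * q.2⁻¹ = 1 by simp [mul_inv_eq_one, h]), mul_zero, mul_zero]


/-- Proposition 3.1 of the paper, biCSP.  Let a product C × C' of finite
cyclic groups of orders k and ℓ act on a finite set X, let ω, ω' embed C, C' into ℂ×, and
let P ∈ ℕ[t,q].  Writing a(i,j) for the sum of the coefficients of t^α q^β of P over
α ≡ i (mod k), β ≡ j (mod ℓ), the following are equivalent:
(i) for all (c,c'), P(ω(c),ω'(c')) = #{x ∈ X : (c,c')·x = x};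
(ii) for all 0 ≤ i < k, 0 ≤ j < ℓ, a(i,j) is the number of C × C'-orbits on X whose
stabilizer (of every element of the orbit) is contained in ker ρ^{(i,j)}, where
ρ^{(i,j)}(c,c') = ω(c)^i ω'(c')^j. -/
theorem stmt5 (C C' : Type*) [Group C] [Group C'] [Fintype C] [Fintype C']
    [IsCyclic C] [IsCyclic C'] (k l : ℕ) (hk : k = Fintype.card C) (hl : l = Fintype.card C')
    (X : Type*) [Fintype X] [MulAction (C × C') X]
    (ω : C →* ℂˣ) (hω : Function.Injective ω)
    (ω' : C' →* ℂˣ) (hω' : Function.Injective ω')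
    (P : MvPolynomial (Fin 2) ℕ) :
    (∀ (c : C) (c' : C'),
        eval₂ (Nat.castRingHom ℂ) ![((ω c : ℂˣ) : ℂ), ((ω' c' : ℂˣ) : ℂ)] P =
          (Nat.card {x : X // (c, c') • x = x} : ℂ)) ↔
    (∀ i j : ℕ, i < k → j < l →
        (∑ m ∈ P.support, if m (0 : Fin 2) % k = i ∧ m (1 : Fin 2) % l = j then coeff m P else 0)
          =
        Nat.card {o : Quotient (MulAction.orbitRel (C × C') X) //
          ∀ x : X, Quotient.mk (MulAction.orbitRel (C × C') X) x = o →
            ∀ g ∈ MulAction.stabilizer (C × C') x,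
              (ω g.1 : ℂˣ) ^ i * (ω' g.2 : ℂˣ) ^ j = 1}) := by
  have hk0 : 0 < k := hk ▸ Fintype.card_pos
  have hl0 : 0 < l := hl ▸ Fintype.card_pos
  have hkl : ((k : ℂ) * l) ≠ 0 :=
    mul_ne_zero (Nat.cast_ne_zero.mpr hk0.ne') (Nat.cast_ne_zero.mpr hl0.ne')
  constructor
  · intro h i j hi hj
    have h3 : ∀ p : C × C',
        (∑ i' ∈ Finset.range k, ∑ j' ∈ Finset.range l,
          (((∑ m ∈ P.support, if m (0 : Fin 2) % k = i' ∧ m (1 : Fin 2) % l = j' then coeff m P else 0) : ℕ) : ℂ) * (((ω p.1 : ℂˣ) : ℂ) ^ i' * ((ω' p.2 : ℂˣ) : ℂ) ^ j'))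
          = (Nat.card {x : X // p • x = x} : ℂ) := by
      intro p
      rw [← evalP k l hk hl ω ω' P p.1 p.2]
      exact h p.1 p.2
    have h1 : ∑ p : C × C',
        (∑ i' ∈ Finset.range k, ∑ j' ∈ Finset.range l,
          (((∑ m ∈ P.support, if m (0 : Fin 2) % k = i' ∧ m (1 : Fin 2) % l = j' then coeff m P else 0) : ℕ) : ℂ) * (((ω p.1 : ℂˣ) : ℂ) ^ i' * ((ω' p.2 : ℂˣ) : ℂ) ^ j')) *
        (((psiAux ω ω' i j p)⁻¹ : ℂˣ) : ℂ) = (((∑ m ∈ P.support, if m (0 : Fin 2) % k = i ∧ m (1 : Fin 2) % l = j then coeff m P else 0) : ℕ) : ℂ) * ((k : ℂ) * l) :=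
      inv_fourier k l hk hl ω hω ω' hω'
        (fun i' j' => (((∑ m ∈ P.support, if m (0 : Fin 2) % k = i' ∧ m (1 : Fin 2) % l = j' then coeff m P else 0) : ℕ) : ℂ)) hi hj
    have h2 : ∑ p : C × C',
        (Nat.card {x : X // p • x = x} : ℂ) * (((psiAux ω ω' i j p)⁻¹ : ℂˣ) : ℂ) =
        ((Nat.card {o : Quotient (MulAction.orbitRel (C × C') X) //
          ∀ x : X, Quotient.mk (MulAction.orbitRel (C × C') X) x = o →
            ∀ g ∈ MulAction.stabilizer (C × C') x,
              (ω g.1 : ℂˣ) ^ i * (ω' g.2 : ℂˣ) ^ j = 1}) : ℂ) * ((Fintype.card C : ℂ) * (Fintype.card C')) :=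
      fix_fourier X ω ω' i j
    have h4 : (((∑ m ∈ P.support, if m (0 : Fin 2) % k = i ∧ m (1 : Fin 2) % l = j then coeff m P else 0) : ℕ) : ℂ) * ((k : ℂ) * l) = ((Nat.card {o : Quotient (MulAction.orbitRel (C × C') X) //
          ∀ x : X, Quotient.mk (MulAction.orbitRel (C × C') X) x = o →
            ∀ g ∈ MulAction.stabilizer (C × C') x,
              (ω g.1 : ℂˣ) ^ i * (ω' g.2 : ℂˣ) ^ j = 1}) : ℂ) * ((k : ℂ) * l) := by
      rw [← h1, Finset.sum_congr rfl fun p _ => by rw [h3 p], h2, ← hk, ← hl]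
    exact_mod_cast mul_right_cancel₀ hkl h4
  · intro h c c'
    rw [evalP k l hk hl ω ω' P c c']
    have h5 : ∀ i ∈ Finset.range k, ∀ j ∈ Finset.range l,
        (∑ q : C × C', (Nat.card {x : X // q • x = x} : ℂ) *
          (((psiAux ω ω' i j q)⁻¹ : ℂˣ) : ℂ)) = (((∑ m ∈ P.support, if m (0 : Fin 2) % k = i ∧ m (1 : Fin 2) % l = j then coeff m P else 0) : ℕ) : ℂ) * ((k : ℂ) * l) := by
      intro i hi j hj
      rw [fix_fourier X ω ω' i j, ← hk, ← hl,
        ← h i j (Finset.mem_range.mp hi) (Finset.mem_range.mp hj)]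
    refine mul_right_cancel₀ hkl ?_
    calc (∑ i ∈ Finset.range k, ∑ j ∈ Finset.range l,
            (((∑ m ∈ P.support, if m (0 : Fin 2) % k = i ∧ m (1 : Fin 2) % l = j then coeff m P else 0) : ℕ) : ℂ) * (((ω c : ℂˣ) : ℂ) ^ i * ((ω' c' : ℂˣ) : ℂ) ^ j)) * ((k : ℂ) * l)
        = ∑ i ∈ Finset.range k, ∑ j ∈ Finset.range l,
            ((((∑ m ∈ P.support, if m (0 : Fin 2) % k = i ∧ m (1 : Fin 2) % l = j then coeff m P else 0) : ℕ) : ℂ) * ((k : ℂ) * l)) *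
              (((ω c : ℂˣ) : ℂ) ^ i * ((ω' c' : ℂˣ) : ℂ) ^ j) := by
          rw [Finset.sum_mul]
          refine Finset.sum_congr rfl fun i _ => ?_
          rw [Finset.sum_mul]
          exact Finset.sum_congr rfl fun j _ => by ring
      _ = ∑ i ∈ Finset.range k, ∑ j ∈ Finset.range l,
            (∑ q : C × C', (Nat.card {x : X // q • x = x} : ℂ) *
              (((psiAux ω ω' i j q)⁻¹ : ℂˣ) : ℂ)) *
              (((ω c : ℂˣ) : ℂ) ^ i * ((ω' c' : ℂˣ) : ℂ) ^ j) := by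
          refine Finset.sum_congr rfl fun i hi => Finset.sum_congr rfl fun j hj => ?_
          rw [h5 i hi j hj]
      _ = (Nat.card {x : X // (c, c') • x = x} : ℂ) * ((k : ℂ) * l) :=
          fourier_inv k l hk hl ω hω ω' hω'
            (fun q => (Nat.card {x : X // q • x = x} : ℂ)) (c, c')
end
end

section
/- Let G be a finite group acting on a finite set X and let ρ : G → ℂ^× be a group homomorphism (a one-dimensional character). Then Σ_{g ∈ G} ρ(g)^{−1} · |{x ∈ X : g·x = x}| = |G| · N, where N is the number of G-orbits O on X such that the stabilizer subgroup of some (equivalently, every) element of O is contained in the kernel of ρ. (Equivalently: the multiplicity of ρ in the permutation representation ℂ[X] equals the number of orbits whose stabilizer lies in ker ρ.) -/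
noncomputable section

open MulAction Finset

/-- Sum of a one-dimensional character over a finite group. -/
private lemma char_sum {H : Type*} [Group H] [Fintype H] (χ : H →* ℂˣ) :
    ∑ h : H, ((χ h : ℂˣ) : ℂ) = if ∀ h, χ h = 1 then (Fintype.card H : ℂ) else 0 := by
  split_ifs with h
  · simp [h]
  · push_neg at h
    obtain ⟨h0, hh0⟩ := h
    have key : ((χ h0 : ℂˣ) : ℂ) * ∑ h : H, ((χ h : ℂˣ) : ℂ) = ∑ h : H, ((χ h : ℂˣ) : ℂ) := by
      rw [Finset.mul_sum]
      calc ∑ h : H, ((χ h0 : ℂˣ) : ℂ) * ((χ h : ℂˣ) : ℂ)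
          = ∑ h : H, ((χ (h0 * h) : ℂˣ) : ℂ) := by
            refine Finset.sum_congr rfl fun h _ => ?_
            rw [map_mul]; push_cast; ring
        _ = ∑ h : H, ((χ h : ℂˣ) : ℂ) :=
            Fintype.sum_equiv (Equiv.mulLeft h0) _ _ (fun h => rfl)
    have h1 : ((χ h0 : ℂˣ) : ℂ) ≠ 1 := fun hc => hh0 (Units.ext (by simpa using hc))
    have := sub_eq_zero.mpr key
    rw [← sub_one_mul] at this
    rcases mul_eq_zero.mp this with h' | h'
    · exact absurd (sub_eq_zero.mp h') h1
    · exact h'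

private lemma good_congr {G : Type*} [Group G] {X : Type*} [MulAction G X]
    (ρ : G →* ℂˣ) (g : G) (y : X) :
    (∀ k ∈ MulAction.stabilizer G (g • y), ρ k = 1) ↔
      (∀ k ∈ MulAction.stabilizer G y, ρ k = 1) := by
  rw [MulAction.stabilizer_smul_eq_stabilizer_map_conj]
  have conj_eq : ∀ k : G, ρ (g * k * g⁻¹) = ρ k := by
    intro k
    rw [map_mul, map_mul, map_inv, mul_comm (ρ g) (ρ k), mul_assoc, mul_inv_cancel, mul_one]
  constructor
  · intro h k hk
    have := h (g * k * g⁻¹) (Subgroup.mem_map.mpr ⟨k, hk, rfl⟩)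
    rwa [conj_eq] at this
  · intro h k hk
    obtain ⟨m, hm, rfl⟩ := Subgroup.mem_map.mp hk
    have : (MulAut.conj g).toMonoidHom m = g * m * g⁻¹ := rfl
    rw [this, conj_eq]
    exact h m hm

/-- For a finite group G acting on a finite set X and a one-dimensional
character ρ : G → ℂ×, one has Σ_{g∈G} ρ(g)⁻¹·#{x : g·x = x} = |G| · N, where N is the
number of G-orbits on X whose stabilizer (of every element of the orbit) lies in ker ρ;
i.e. the multiplicity of ρ in the permutation representation ℂ[X] is N. -/
theorem stmt6 (G : Type*) [Group G] [Fintype G] (X : Type*) [Fintype X] [MulAction G X]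
    (ρ : G →* ℂˣ) :
    (∑ g : G, (((ρ g)⁻¹ : ℂˣ) : ℂ) * (Nat.card {x : X // g • x = x} : ℂ)) =
      (Fintype.card G : ℂ) *
        (Nat.card {o : Quotient (MulAction.orbitRel G X) //
          ∀ x : X, Quotient.mk (MulAction.orbitRel G X) x = o →
            ∀ g ∈ MulAction.stabilizer G x, ρ g = 1} : ℂ) := by
  classical
  set P : Quotient (MulAction.orbitRel G X) → Prop := fun o =>
    ∀ x : X, Quotient.mk (MulAction.orbitRel G X) x = o →
      ∀ g ∈ MulAction.stabilizer G x, ρ g = 1 with hP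
  -- Step 1: LHS as a double sum, then swap.
  have step1 : (∑ g : G, (((ρ g)⁻¹ : ℂˣ) : ℂ) * (Nat.card {x : X // g • x = x} : ℂ)) =
      ∑ x : X, ∑ g : G, (if g • x = x then (((ρ g)⁻¹ : ℂˣ) : ℂ) else 0) := by
    rw [Finset.sum_comm]
    refine Finset.sum_congr rfl fun g _ => ?_
    rw [← Finset.sum_filter, Finset.sum_const, Nat.card_eq_fintype_card,
      Fintype.card_subtype, nsmul_eq_mul, mul_comm]
  -- Step 2: inner sum is a character sum over the stabilizer.
  have step2 : ∀ x : X, (∑ g : G, (if g • x = x then (((ρ g)⁻¹ : ℂˣ) : ℂ) else 0)) =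
      (if (∀ g ∈ MulAction.stabilizer G x, ρ g = 1)
        then (Nat.card (MulAction.stabilizer G x) : ℂ) else 0) := by
    intro x
    have hsub : ∑ g : G, (if g • x = x then (((ρ g)⁻¹ : ℂˣ) : ℂ) else 0) =
        ∑ g : MulAction.stabilizer G x, (((ρ (g : G))⁻¹ : ℂˣ) : ℂ) := by
      rw [← Finset.sum_filter]
      exact Finset.sum_subtype _ (fun g => by simp [MulAction.mem_stabilizer_iff]) _
    rw [hsub]
    have := char_sum ((ρ.comp (MulAction.stabilizer G x).subtype)⁻¹)
    simp only [MonoidHom.inv_apply, MonoidHom.coe_comp, Function.comp_apply,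
      Subgroup.coe_subtype, inv_eq_one] at this
    rw [this, Nat.card_eq_fintype_card]
    congr 1
    simp [Subtype.forall]
  rw [step1]
  simp_rw [step2]
  -- Step 3: group by orbits.
  rw [← Finset.sum_fiberwise Finset.univ (fun x => Quotient.mk (MulAction.orbitRel G X) x)
    (fun x => if (∀ g ∈ MulAction.stabilizer G x, ρ g = 1)
      then (Nat.card (MulAction.stabilizer G x) : ℂ) else 0)]
  -- Step 4: each orbit contributes |G| or 0.
  have step4 : ∀ o : Quotient (MulAction.orbitRel G X),
      (∑ x ∈ Finset.univ.filter (fun x => Quotient.mk (MulAction.orbitRel G X) x = o),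
        if (∀ g ∈ MulAction.stabilizer G x, ρ g = 1)
          then (Nat.card (MulAction.stabilizer G x) : ℂ) else 0) =
      (if P o then (Fintype.card G : ℂ) else 0) := by
    intro o
    obtain ⟨y, rfl⟩ := o.exists_rep
    -- membership of the fiber
    have hmem : ∀ x : X, (Quotient.mk (MulAction.orbitRel G X) x =
        Quotient.mk (MulAction.orbitRel G X) y) ↔ x ∈ MulAction.orbit G y := by
      intro x
      constructor
      · intro h
        exact MulAction.orbitRel_apply.mp (Quotient.exact h)
      · intro h
        exact Quotient.sound (MulAction.orbitRel_apply.mpr h)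
    -- the goodness predicate and stabilizer cardinality are constant on the orbit
    have hgood : ∀ x ∈ MulAction.orbit G y,
        ((∀ g ∈ MulAction.stabilizer G x, ρ g = 1) ↔
          (∀ g ∈ MulAction.stabilizer G y, ρ g = 1)) := by
      rintro x ⟨g, rfl⟩
      exact good_congr ρ g y
    have hcard : ∀ x ∈ MulAction.orbit G y,
        Nat.card (MulAction.stabilizer G x) = Nat.card (MulAction.stabilizer G y) := by
      rintro x ⟨g, rfl⟩
      rw [MulAction.stabilizer_smul_eq_stabilizer_map_conj]
      exact Nat.card_congr (((MulAut.conj g).subgroupMap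
        (MulAction.stabilizer G y)).toEquiv.symm)
    have hPiff : P (Quotient.mk (MulAction.orbitRel G X) y) ↔
        (∀ g ∈ MulAction.stabilizer G y, ρ g = 1) := by
      constructor
      · intro h
        exact h y rfl
      · intro h x hx
        exact (hgood x ((hmem x).mp hx)).mpr h
    have hfiber : Finset.univ.filter
        (fun x => Quotient.mk (MulAction.orbitRel G X) x =
          Quotient.mk (MulAction.orbitRel G X) y) =
        Finset.univ.filter (fun x => x ∈ MulAction.orbit G y) := by
      refine Finset.filter_congr fun x _ => by simpa using hmem x
    rw [hfiber]
    have horbcard : (Finset.univ.filter (fun x => x ∈ MulAction.orbit G y)).card =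
        Fintype.card (MulAction.orbit G y) := (Fintype.card_subtype _).symm
    by_cases hgy : ∀ g ∈ MulAction.stabilizer G y, ρ g = 1
    · rw [if_pos (hPiff.mpr hgy)]
      have : ∀ x ∈ Finset.univ.filter (fun x => x ∈ MulAction.orbit G y),
          (if (∀ g ∈ MulAction.stabilizer G x, ρ g = 1)
            then (Nat.card (MulAction.stabilizer G x) : ℂ) else 0) =
          (Nat.card (MulAction.stabilizer G y) : ℂ) := by
        intro x hx
        have hxo : x ∈ MulAction.orbit G y := (Finset.mem_filter.mp hx).2
        rw [if_pos ((hgood x hxo).mpr hgy), hcard x hxo]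
      rw [Finset.sum_congr rfl this, Finset.sum_const, horbcard, nsmul_eq_mul,
        Nat.card_eq_fintype_card, ← Nat.cast_mul,
        MulAction.card_orbit_mul_card_stabilizer_eq_card_group G y]
    · rw [if_neg (fun h => hgy (hPiff.mp h))]
      refine Finset.sum_eq_zero fun x hx => ?_
      have hxo : x ∈ MulAction.orbit G y := (Finset.mem_filter.mp hx).2
      rw [if_neg (fun h => hgy ((hgood x hxo).mp h))]
  rw [Finset.sum_congr rfl (fun o _ => step4 o)]
  -- Step 5: count good orbits.
  rw [← Finset.sum_filter, Finset.sum_const, nsmul_eq_mul,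
    Nat.card_eq_fintype_card, Fintype.card_subtype, mul_comm]
end
end

section
/- Let n ≥ 2, let c be an n-cycle and c' an (n−1)-cycle in the symmetric group 𝔖_n (i.e., c' has one fixed point and one cycle of length n−1), let ω be a primitive n-th root of unity and ω' a primitive (n−1)-st root of unity in ℂ. Then for all integers i and j, S_n(ω^{−i}, (ω')^{−j}) = |{w ∈ 𝔖_n : c^i w = w (c')^j}|, where S_n(t,q) = Σ_{w ∈ 𝔖_n} t^{maj(w)} q^{maj(w^{−1})}. -/
/-!
Both sides vanish unless `ω ^ (-i) = 1` and `ω' ^ (-j) = 1`, in which case both equal `n!`.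

On the right, `c ^ i * w = w * c' ^ j` forces `c ^ i` to fix `w p`, where `p` is the fixed point
of `c'`; a power of an `n`-cycle with a fixed point is trivial, and then so is `c' ^ j`.

On the left, inserting the new largest letter into the `n` slots of a word `u ∈ 𝔖_{n-1}` raises
`maj` by `0, 1, …, n - 1` in some order, while `maj` of the inverse only changes by a multiple of
`n - 1`. Hence `S_n(t, q) = [n]_t S_{n-1}(t, q)` whenever `q ^ (n - 1) = 1`, which vanishes when
`t ≠ 1` is an `n`-th root of unity. When `t = 1 ≠ q`, the symmetry `S_n(t, q) = S_n(q, t)` and two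
steps of this recursion produce the factor `[n - 1]_q = 0`.
-/

noncomputable section

/-- The major index of a permutation w of {0,…,n−1} (1-based positions): the sum of the
positions p+1 ∈ {1,…,n−1} such that w(p) > w(p+1). -/
def permMaj {n : ℕ} (w : Equiv.Perm (Fin n)) : ℕ :=
  ∑ p : Fin n, if h : (p : ℕ) + 1 < n then
    (if w ⟨(p : ℕ) + 1, h⟩ < w p then (p : ℕ) + 1 else 0) else 0

/-- The bimahonian distribution Sₙ(t,q) = Σ_{w ∈ 𝔖ₙ} t^{maj(w)} q^{maj(w⁻¹)}, here as a
function of complex arguments t, q. -/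
def Sval (n : ℕ) (t q : ℂ) : ℂ :=
  ∑ w : Equiv.Perm (Fin n), t ^ permMaj w * q ^ permMaj w⁻¹

open Finset

/-- Positions are 0-based and `p` is a descent when `v (p - 1) > v p`, so `p` is the 1-based
position of the pair `(p - 1, p)`. -/
def wordMaj (L : ℕ) (v : ℕ → ℕ) : ℕ :=
  ∑ p ∈ range L, if 0 < p ∧ v p < v (p - 1) then p else 0

theorem wordMaj_succ (L : ℕ) (v : ℕ → ℕ) :
    wordMaj (L + 1) v = wordMaj L v + if 0 < L ∧ v L < v (L - 1) then L else 0 :=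
  sum_range_succ _ _

theorem wordMaj_congr {L : ℕ} {v v' : ℕ → ℕ}
    (h : ∀ p < L, ∀ q < L, (v p < v q ↔ v' p < v' q)) : wordMaj L v = wordMaj L v' := by
  refine sum_congr rfl fun p hp => ?_
  rw [mem_range] at hp
  exact if_congr (and_congr_right fun _ => h p hp (p - 1) (by omega)) rfl rfl

def descents (v : ℕ → ℕ) (a b : ℕ) : ℕ :=
  ∑ p ∈ Ico a b, if v p < v (p - 1) then 1 else 0

theorem descents_le (v : ℕ → ℕ) (a b : ℕ) : descents v a b ≤ b - a := by
  calc descents v a b ≤ #(Ico a b) • 1 := sum_le_card_nsmul _ _ _ fun p _ => by split <;> omega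
    _ = b - a := by simp

theorem descents_add (v : ℕ → ℕ) {a b c : ℕ} (hab : a ≤ b) (hbc : b ≤ c) :
    descents v a b + descents v b c = descents v a c :=
  sum_Ico_consecutive _ hab hbc

theorem descents_succ (v : ℕ → ℕ) {a b : ℕ} (hab : a ≤ b) :
    descents v a (b + 1) = descents v a b + if v b < v (b - 1) then 1 else 0 :=
  sum_Ico_succ_top hab _

def insertAt (g M : ℕ) (v : ℕ → ℕ) : ℕ → ℕ :=
  fun p => if p < g then v p else if p = g then M else v (p - 1)

/-- The increase of `wordMaj` when a letter larger than all of `v` is put into slot `g`: the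
descent at `g` disappears, a new one appears at `g + 1` unless `g = m`, and the descents after `g`
move one step to the right. -/
def insertInc (v : ℕ → ℕ) (m g : ℕ) : ℕ :=
  if g = m then 0
  else if 0 < g ∧ v g < v (g - 1) then 1 + descents v (g + 1) m
  else g + 1 + descents v (g + 1) m

theorem wordMaj_insertAt_self {m M : ℕ} {v : ℕ → ℕ} (hv : ∀ p < m, v p < M) :
    wordMaj (m + 1) (insertAt m M v) = wordMaj m v := by
  rw [wordMaj_succ, wordMaj_congr (v' := v) fun p hp q hq => by simp [insertAt, hp, hq],
    if_neg, add_zero]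
  rintro ⟨hm, hlt⟩
  simp only [insertAt, lt_irrefl, if_true, if_false, show m - 1 < m by omega] at hlt
  exact (hv _ (by omega)).not_gt hlt

theorem wordMaj_insertAt {m g M : ℕ} {v : ℕ → ℕ} (hg : g ≤ m) (hv : ∀ p < m, v p < M) :
    wordMaj (m + 1) (insertAt g M v) = wordMaj m v + insertInc v m g := by
  induction m with
  | zero => simp [wordMaj, insertInc, Nat.le_zero.1 hg]
  | succ m ih =>
    obtain rfl | hg := hg.eq_or_lt
    · simp [wordMaj_insertAt_self hv, insertInc]
    have hvm := hv m (by omega)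
    rw [wordMaj_succ (m + 1), ih (by omega) fun p hp => hv p (by omega), wordMaj_succ m]
    obtain rfl | hgm := (Nat.lt_succ_iff.1 hg).eq_or_lt
    · simp only [insertInc, descents, Ico_self, sum_empty, insertAt, Nat.add_sub_cancel]
      split_ifs <;> omega
    · simp only [insertInc, descents_succ v (show g + 1 ≤ m by omega), insertAt,
        Nat.add_sub_cancel]
      split_ifs <;> omega

theorem insertInc_lt {v : ℕ → ℕ} {m g : ℕ} (hg : g ≤ m) : insertInc v m g < m + 1 := by
  have := descents_le v (g + 1) m
  unfold insertInc
  split_ifs <;> omega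

theorem insertInc_ne_of_lt {v : ℕ → ℕ} {m g₁ g₂ : ℕ} (h : g₁ < g₂) (hg₂ : g₂ ≤ m) :
    insertInc v m g₁ ≠ insertInc v m g₂ := by
  unfold insertInc
  obtain rfl | hg₂ := hg₂.eq_or_lt
  · rw [if_pos rfl, if_neg h.ne]
    split_ifs <;> omega
  have hsplit := descents_add v (show g₁ + 1 ≤ g₂ + 1 by omega) (show g₂ + 1 ≤ m by omega)
  have hlast := descents_succ v (show g₁ + 1 ≤ g₂ by omega)
  have hbefore := descents_le v (g₁ + 1) g₂
  split_ifs at hlast ⊢ <;> omega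

theorem sum_comp_insertInc {β : Type*} [AddCommMonoid β] (v : ℕ → ℕ) (m : ℕ) (f : ℕ → β) :
    ∑ g ∈ range (m + 1), f (insertInc v m g) = ∑ e ∈ range (m + 1), f e := by
  have hmaps : ∀ g ∈ range (m + 1), insertInc v m g ∈ range (m + 1) := fun g hg =>
    mem_range.2 (insertInc_lt (Nat.lt_succ_iff.1 (mem_range.1 hg)))
  have hinj : Set.InjOn (insertInc v m) (range (m + 1)) := by
    intro g₁ hg₁ g₂ hg₂ heq
    simp only [coe_range, Set.mem_Iio] at hg₁ hg₂
    rcases lt_trichotomy g₁ g₂ with h | h | h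
    · exact absurd heq (insertInc_ne_of_lt h (by omega))
    · exact h
    · exact absurd heq.symm (insertInc_ne_of_lt h (by omega))
  exact sum_nbij _ hmaps hinj (surjOn_of_injOn_of_card_le _ hmaps hinj le_rfl) fun _ _ => rfl

open Equiv

def permWord {n : ℕ} (w : Perm (Fin n)) : ℕ → ℕ :=
  fun p => if h : p < n then w ⟨p, h⟩ else 0

theorem permWord_lt {n : ℕ} (w : Perm (Fin n)) : ∀ p < n, permWord w p < n := fun p hp => by
  simp [permWord, hp]

theorem permWord_val {n : ℕ} (w : Perm (Fin n)) (x : Fin n) : permWord w x = w x := by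
  simp [permWord]

theorem permMaj_eq_wordMaj {n : ℕ} (w : Perm (Fin n)) : permMaj w = wordMaj n (permWord w) := by
  cases n with
  | zero => simp [permMaj, wordMaj]
  | succ k =>
    rw [permMaj, Fin.sum_univ_castSucc, wordMaj, sum_range_succ', ← Fin.sum_univ_eq_sum_range]
    simp only [Fin.val_last, lt_irrefl, dite_false, add_zero, false_and, if_false]
    refine Fintype.sum_congr _ _ fun p => ?_
    rw [dif_pos (by simp), Nat.add_sub_cancel, show permWord w (p + 1) = w p.succ from
      permWord_val w p.succ, show permWord w p = w p.castSucc from permWord_val w p.castSucc]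
    exact if_congr ⟨fun h => ⟨Nat.succ_pos _, h⟩, fun h => h.2⟩ rfl rfl

/-- The word of `u` with the new largest letter `m` inserted at position `k`. -/
def insertMax {m : ℕ} (u : Perm (Fin m)) (k : Fin (m + 1)) : Perm (Fin (m + 1)) :=
  (finSuccEquiv' k).trans ((optionCongr u).trans (finSuccEquiv' (Fin.last m)).symm)

section insertMax

variable {m : ℕ} (u : Perm (Fin m)) (k : Fin (m + 1))

@[simp]
theorem insertMax_apply_self : insertMax u k k = Fin.last m := by
  simp [insertMax]

@[simp]
theorem insertMax_apply_succAbove (j : Fin m) :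
    insertMax u k (k.succAbove j) = (u j).castSucc := by
  simp [insertMax]

theorem insertMax_inv_castSucc (x : Fin m) :
    (insertMax u k)⁻¹ x.castSucc = k.succAbove (u⁻¹ x) := by
  rw [Perm.inv_eq_iff_eq, insertMax_apply_succAbove]
  simp

theorem insertMax_bijective :
    Function.Bijective fun uk : Perm (Fin m) × Fin (m + 1) => insertMax uk.1 uk.2 := by
  rw [Fintype.bijective_iff_injective_and_card]
  refine ⟨fun ⟨u, k⟩ ⟨u', k'⟩ h => ?_, by simp [Fintype.card_perm, Nat.factorial_succ, mul_comm]⟩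
  simp only at h
  obtain rfl : k = k' := by
    rw [← Perm.inv_eq_iff_eq.2 (insertMax_apply_self u k).symm,
      ← Perm.inv_eq_iff_eq.2 (insertMax_apply_self u' k').symm, h]
  refine Prod.ext (Equiv.ext fun j => Fin.castSucc_injective m ?_) rfl
  rw [← insertMax_apply_succAbove, ← insertMax_apply_succAbove, h]

theorem permWord_insertMax (x : Fin (m + 1)) :
    permWord (insertMax u k) x = insertAt k m (permWord u) x := by
  refine Fin.succAboveCases k ?_ (fun j => ?_) x
  · simp [permWord_val, insertAt]
  rw [permWord_val, insertMax_apply_succAbove, Fin.val_castSucc, ← permWord_val]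
  rcases lt_or_ge j.castSucc k with h | h
  · have hj : (j : ℕ) < k := h
    rw [Fin.succAbove_of_castSucc_lt _ _ h, Fin.val_castSucc, insertAt, if_pos hj]
  · have hj : (k : ℕ) ≤ j := h
    rw [Fin.succAbove_of_le_castSucc _ _ h, Fin.val_succ, insertAt, if_neg (by omega),
      if_neg (by omega), Nat.add_sub_cancel]

theorem permMaj_insertMax :
    permMaj (insertMax u k) = permMaj u + insertInc (permWord u) m k := by
  rw [permMaj_eq_wordMaj, permMaj_eq_wordMaj, ← wordMaj_insertAt k.is_le (permWord_lt u)]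
  refine wordMaj_congr fun p hp q hq => ?_
  rw [← Fin.val_mk hp, ← Fin.val_mk hq, permWord_insertMax, permWord_insertMax]

theorem permMaj_inv_insertMax_modEq :
    permMaj (insertMax u k)⁻¹ ≡ permMaj u⁻¹ [MOD m] := by
  have hword (x : Fin m) : permWord (insertMax u k)⁻¹ x = k.succAbove (u⁻¹ x) := by
    rw [← Fin.val_castSucc, permWord_val, insertMax_inv_castSucc]
  rw [permMaj_eq_wordMaj, permMaj_eq_wordMaj, wordMaj_succ,
    wordMaj_congr (v' := permWord u⁻¹) fun p hp q hq => ?_]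
  · exact Nat.add_modEq_left_iff.2 (by split_ifs <;> simp)
  · rw [← Fin.val_mk hp, ← Fin.val_mk hq, hword, hword, permWord_val, permWord_val,
      ← Fin.lt_def, ← Fin.lt_def, Fin.succAbove_lt_succAbove_iff]

end insertMax

theorem Sval_succ {m : ℕ} (t : ℂ) {q : ℂ} (hq : q ^ m = 1) :
    Sval (m + 1) t q = (∑ e ∈ range (m + 1), t ^ e) * Sval m t q := by
  have hfiber (u : Perm (Fin m)) : ∑ k : Fin (m + 1),
      t ^ permMaj (insertMax u k) * q ^ permMaj (insertMax u k)⁻¹ =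
      (∑ e ∈ range (m + 1), t ^ e) * (t ^ permMaj u * q ^ permMaj u⁻¹) := by
    simp only [permMaj_insertMax, pow_add,
      pow_eq_pow_of_modEq (permMaj_inv_insertMax_modEq u _) hq]
    rw [Fin.sum_univ_eq_sum_range (fun g => t ^ permMaj u * t ^ insertInc (permWord u) m g *
      q ^ permMaj u⁻¹), ← sum_comp_insertInc (permWord u) m (t ^ ·), sum_mul]
    exact sum_congr rfl fun _ _ => by ring
  rw [Sval, ← Fintype.sum_bijective _ insertMax_bijective _ _ fun _ => rfl, Fintype.sum_prod_type,
    Sval, mul_sum]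
  exact sum_congr rfl fun u _ => hfiber u

theorem Sval_comm (n : ℕ) (t q : ℂ) : Sval n t q = Sval n q t :=
  Fintype.sum_equiv (Equiv.inv _) _ _ fun w => by simp [mul_comm]

theorem geom_sum_eq_zero_of_pow_eq_one {K : Type*} [DivisionRing K] {t : K} {n : ℕ}
    (ht : t ^ n = 1) (ht₁ : t ≠ 1) : ∑ e ∈ range n, t ^ e = 0 := by
  rw [geom_sum_eq ht₁, ht, sub_self, zero_div]

theorem zpow_pow_eq_one_of_pow_eq_one {G : Type*} [DivisionMonoid G] {ζ : G} {k : ℕ}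
    (h : ζ ^ k = 1) (l : ℤ) : (ζ ^ l) ^ k = 1 := by
  rw [← zpow_natCast, ← zpow_mul, mul_comm, zpow_mul, zpow_natCast, h, one_zpow]

theorem Sval_one_one (n : ℕ) : Sval n 1 1 = n.factorial := by
  simp [Sval, Fintype.card_perm]

theorem Sval_eq_zero {n : ℕ} (hn : 2 ≤ n) {t q : ℂ} (ht : t ^ n = 1) (hq : q ^ (n - 1) = 1)
    (h : t ≠ 1 ∨ q ≠ 1) : Sval n t q = 0 := by
  obtain ⟨m, rfl⟩ : ∃ m, n = m + 1 + 1 := ⟨n - 2, by omega⟩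
  rw [Nat.add_sub_cancel] at hq
  by_cases ht₁ : t = 1
  · subst ht₁
    rw [Sval_comm, Sval_succ q (one_pow _), Sval_succ q (one_pow _),
      geom_sum_eq_zero_of_pow_eq_one hq (h.resolve_left (not_not.2 rfl)), zero_mul, mul_zero]
  · rw [Sval_succ t hq, geom_sum_eq_zero_of_pow_eq_one ht ht₁, zero_mul]

theorem Equiv.Perm.IsCycleOn.zpow_eq_one_iff {α : Type*} {f : Perm α} {s : Finset α}
    (hf : f.IsCycleOn s) (hout : ∀ x ∉ s, f x = x) {a : α} (ha : a ∈ s) {i : ℤ} :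
    f ^ i = 1 ↔ (#s : ℤ) ∣ i := by
  refine ⟨fun h => (hf.zpow_apply_eq ha).1 (by rw [h, Perm.one_apply]),
    fun h => Equiv.ext fun x => ?_⟩
  by_cases hx : x ∈ s
  · exact (hf.zpow_apply_eq hx).2 h
  · exact Perm.zpow_apply_eq_self_of_apply_eq_self (hout x hx) i

theorem Equiv.Perm.isCycleOn_univ_of_forall_exists_pow_apply_eq {α : Type*} {f : Perm α}
    (h : ∀ x y, ∃ m : ℕ, (f ^ m) x = y) : f.IsCycleOn _root_.Set.univ :=
  ⟨Set.bijOn_univ.2 f.bijective, fun x _ y _ => let ⟨m, hm⟩ := h x y; ⟨m, by simpa using hm⟩⟩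

theorem Equiv.Perm.isCycleOn_compl_singleton {α : Type*} {f : Perm α} {p : α} (hp : f p = p)
    (h : ∀ x y, x ≠ p → y ≠ p → ∃ m : ℕ, (f ^ m) x = y) : f.IsCycleOn {p}ᶜ :=
  ⟨(Set.bijOn_singleton.2 hp).compl f.bijective, fun x hx y hy =>
    let ⟨m, hm⟩ := h x y hx hy; ⟨m, by simpa using hm⟩⟩

theorem Equiv.Perm.zpow_mul_eq_mul_zpow_iff {α : Type*} {c c' w : Perm α} {i j : ℤ} {p : α}
    (hp : c' p = p) (hc : ∀ x, (c ^ i) x = x → c ^ i = 1) :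
    c ^ i * w = w * c' ^ j ↔ c ^ i = 1 ∧ c' ^ j = 1 := by
  refine ⟨fun hw => ?_, fun ⟨hi, hj⟩ => by rw [hi, hj, one_mul, mul_one]⟩
  have hi : c ^ i = 1 := hc (w p) <| by
    rw [← Perm.mul_apply, hw, Perm.mul_apply, Perm.zpow_apply_eq_self_of_apply_eq_self hp]
  rw [hi, one_mul, left_eq_mul] at hw
  exact ⟨hi, hw⟩

/-- Theorem 1.4 of the paper for 𝔖ₙ, with an n-cycle and an (n−1)-cycle.
If c is an n-cycle (transitive), c' is an (n−1)-cycle (it fixes a point p and is transitive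
on the complement of p), ω is a primitive n-th root of unity and ω' a primitive (n−1)-st
root of unity, then for all integers i, j,
Sₙ(ω^{−i}, ω'^{−j}) = #{w ∈ 𝔖ₙ : cⁱ w = w c'ʲ}. -/
theorem stmt9 (n : ℕ) (hn : 2 ≤ n) (c c' : Equiv.Perm (Fin n))
    (hc : ∀ x y : Fin n, ∃ m : ℕ, (c ^ m) x = y)
    (hc' : ∃ p : Fin n, c' p = p ∧
      ∀ x y : Fin n, x ≠ p → y ≠ p → ∃ m : ℕ, (c' ^ m) x = y)
    (ω ω' : ℂ) (hω : IsPrimitiveRoot ω n) (hω' : IsPrimitiveRoot ω' (n - 1))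
    (i j : ℤ) :
    Sval n (ω ^ (-i)) (ω' ^ (-j)) =
      (Nat.card {w : Equiv.Perm (Fin n) // c ^ i * w = w * c' ^ j} : ℂ) := by
  obtain ⟨p, hp, htr⟩ := hc'
  have : Nontrivial (Fin n) := Fin.nontrivial_iff_two_le.2 hn
  obtain ⟨x, hx⟩ := exists_ne p
  have hcyc : c.IsCycleOn (univ : Finset (Fin n)) := by
    simpa using Perm.isCycleOn_univ_of_forall_exists_pow_apply_eq hc
  have hcyc' : c'.IsCycleOn ({p}ᶜ : Finset (Fin n)) := by
    simpa using Perm.isCycleOn_compl_singleton hp htr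
  have hi : c ^ i = 1 ↔ ω ^ (-i) = 1 := by
    rw [hcyc.zpow_eq_one_iff (by simp) (mem_univ x), hω.zpow_eq_one_iff_dvd, dvd_neg, card_univ,
      Fintype.card_fin]
  have hj : c' ^ j = 1 ↔ ω' ^ (-j) = 1 := by
    rw [hcyc'.zpow_eq_one_iff (by simp [hp]) (by simpa using hx), hω'.zpow_eq_one_iff_dvd,
      dvd_neg, card_compl, card_singleton, Fintype.card_fin]
  have hw (w : Perm (Fin n)) : c ^ i * w = w * c' ^ j ↔ ω ^ (-i) = 1 ∧ ω' ^ (-j) = 1 := by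
    rw [Perm.zpow_mul_eq_mul_zpow_iff hp fun y hy => (hcyc.zpow_eq_one_iff (by simp)
      (mem_univ y)).2 ((hcyc.zpow_apply_eq (mem_univ y)).1 hy), hi, hj]
  by_cases h : ω ^ (-i) = 1 ∧ ω' ^ (-j) = 1
  · rw [h.1, h.2, Sval_one_one, Nat.card_congr (Equiv.subtypeUnivEquiv fun w => (hw w).2 h),
      Nat.card_perm, Nat.card_fin]
  · rw [Sval_eq_zero hn (zpow_pow_eq_one_of_pow_eq_one hω.pow_eq_one (-i))
      (zpow_pow_eq_one_of_pow_eq_one hω'.pow_eq_one (-j)) (not_and_or.1 h),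
      Nat.card_eq_zero.2 (Or.inl ⟨fun w => h ((hw w.1).1 w.2)⟩), Nat.cast_zero]
end
end
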